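/- arXiv:math/0205278 — 7 statements merged into one kernel-verified Lean document; each statement's English description precedes it below -/
import Mathlib

section
/- For all positive real numbers a, b, c, d, R, S, the inequality R·arcsin(√(ab/((R+a)(R+b)))) + S·arcsin(√(cd/((S+c)(S+d)))) ≤ (R+S)·arcsin(√((a+c)(b+d)/((R+S+a+c)(R+S+b+d)))) holds. -/
/-!
Substituting `t = √q s` in `arcsin √q = ∫₀^√q dt / √(1 - t²)` writes each side as an integral over
`s ∈ [0, 1]` of `F_{s²}(R, a, b)`, where `F_t(R, a, b) = R √(ab / ((R + a)(R + b) - ab t))`, so it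
suffices that `F_t` is superadditive in `(R, a, b)`. Now `F_t² = H₁ H₂` with
`H₁⁻¹ = (1 - t)/R + 1/a + t/(R + b)` and `H₂⁻¹ = 1/R + 1/b`: weighted harmonic combinations of
quantities that are additive in `(R, a, b)`. Such harmonic combinations are superadditive by
Cauchy–Schwarz, and by Cauchy–Schwarz again so is the geometric mean of two superadditive functions.
-/

open Real Finset intervalIntegral

theorem sq_add_div_add_le {x y : ℝ} (p q : ℝ) (hx : 0 < x) (hy : 0 < y) :
    (p + q) ^ 2 / (x + y) ≤ p ^ 2 / x + q ^ 2 / y := by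
  simpa [Fin.sum_univ_two] using
    sq_sum_div_le_sum_sq_div univ ![p, q] (g := ![x, y]) (by simp [Fin.forall_fin_two, hx, hy])

theorem inv_sum_div_add_inv_sum_div_le {ι : Type*} [Fintype ι] [Nonempty ι]
    {w x y : ι → ℝ} (hw : ∀ i, 0 < w i) (hx : ∀ i, 0 < x i) (hy : ∀ i, 0 < y i) :
    (∑ i, w i / x i)⁻¹ + (∑ i, w i / y i)⁻¹ ≤ (∑ i, w i / (x i + y i))⁻¹ := by
  have expand (p q : ℝ) : ∑ i, w i * (p ^ 2 / x i + q ^ 2 / y i) =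
      p ^ 2 * ∑ i, w i / x i + q ^ 2 * ∑ i, w i / y i := by
    rw [mul_sum, mul_sum, ← sum_add_distrib]
    exact sum_congr rfl fun i _ => by ring
  set A := ∑ i, w i / x i
  set B := ∑ i, w i / y i
  set C := ∑ i, w i / (x i + y i)
  have hA : 0 < A := sum_pos (fun i _ => div_pos (hw i) (hx i)) univ_nonempty
  have hB : 0 < B := sum_pos (fun i _ => div_pos (hw i) (hy i)) univ_nonempty
  have hC : 0 < C := sum_pos (fun i _ => div_pos (hw i) (add_pos (hx i) (hy i))) univ_nonempty
  have key : C * (A + B) ^ 2 ≤ A * B * (A + B) :=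
    calc C * (A + B) ^ 2 = ∑ i, w i * ((B + A) ^ 2 / (x i + y i)) := by
          rw [sum_mul]; congr! 1 with i; ring
      _ ≤ ∑ i, w i * (B ^ 2 / x i + A ^ 2 / y i) := by
          gcongr with i
          · exact (hw i).le
          · exact sq_add_div_add_le B A (hx i) (hy i)
      _ = A * B * (A + B) := by rw [expand]; ring
  rw [inv_add_inv hA.ne' hB.ne', le_inv_comm₀ (by positivity) hC, inv_div,
    le_div_iff₀ (by positivity)]
  nlinarith

theorem sqrt_mul_add_sqrt_mul_le {p₁ p₂ q₁ q₂ : ℝ} (hp₁ : 0 ≤ p₁) (hp₂ : 0 ≤ p₂)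
    (hq₁ : 0 ≤ q₁) (hq₂ : 0 ≤ q₂) :
    √(p₁ * q₁) + √(p₂ * q₂) ≤ √((p₁ + p₂) * (q₁ + q₂)) := by
  simpa [Fin.sum_univ_two, sqrt_mul, hp₁, hp₂, add_nonneg hp₁ hp₂] using
    sum_sqrt_mul_sqrt_le univ (f := ![p₁, p₂]) (g := ![q₁, q₂])
      (by simp [Fin.forall_fin_two, hp₁, hp₂]) (by simp [Fin.forall_fin_two, hq₁, hq₂])

theorem mul_sqrt_div_eq_sqrt_mul_inv {R a b t : ℝ} (hR : 0 < R) (ha : 0 < a) (hb : 0 < b)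
    (ht : t ≤ 1) :
    R * √(a * b / ((R + a) * (R + b) - a * b * t)) =
      √(((1 - t) / R + 1 / a + t / (R + b))⁻¹ * (1 / R + 1 / b)⁻¹) := by
  have hD : 0 < (R + a) * (R + b) - a * b * t := by nlinarith [mul_pos ha hb]
  have hH : (1 - t) / R + 1 / a + t / (R + b) =
      ((R + a) * (R + b) - a * b * t) / (R * a * (R + b)) := by
    field_simp; ring
  nth_rw 1 [← sqrt_sq hR.le]
  rw [← sqrt_mul (sq_nonneg R), hH, one_div_add_one_div hR.ne' hb.ne', inv_div, inv_div]
  congr 1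
  field_simp

theorem mul_sqrt_div_superadditive {a b c d R S t : ℝ} (ha : 0 < a) (hb : 0 < b)
    (hc : 0 < c) (hd : 0 < d) (hR : 0 < R) (hS : 0 < S) (ht₀ : 0 < t) (ht₁ : t < 1) :
    R * √(a * b / ((R + a) * (R + b) - a * b * t)) +
        S * √(c * d / ((S + c) * (S + d) - c * d * t)) ≤
      (R + S) * √((a + c) * (b + d) /
        ((R + S + (a + c)) * (R + S + (b + d)) - (a + c) * (b + d) * t)) := by
  have hsum₁ : ((1 - t) / R + 1 / a + t / (R + b))⁻¹ + ((1 - t) / S + 1 / c + t / (S + d))⁻¹ ≤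
      ((1 - t) / (R + S) + 1 / (a + c) + t / (R + S + (b + d)))⁻¹ := by
    have := inv_sum_div_add_inv_sum_div_le (w := ![1 - t, 1, t]) (x := ![R, a, R + b])
      (y := ![S, c, S + d]) (by simp [Fin.forall_fin_succ, ht₀, ht₁])
      (by simp [Fin.forall_fin_succ, hR, ha]; positivity)
      (by simp [Fin.forall_fin_succ, hS, hc]; positivity)
    simpa [Fin.sum_univ_three, add_add_add_comm R b] using this
  have hsum₂ : (1 / R + 1 / b)⁻¹ + (1 / S + 1 / d)⁻¹ ≤ (1 / (R + S) + 1 / (b + d))⁻¹ := by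
    simpa [Fin.sum_univ_two] using inv_sum_div_add_inv_sum_div_le (w := ![1, 1])
      (x := ![R, b]) (y := ![S, d]) (by simp [Fin.forall_fin_two])
      (by simp [Fin.forall_fin_two, hR, hb]) (by simp [Fin.forall_fin_two, hS, hd])
  rw [mul_sqrt_div_eq_sqrt_mul_inv hR ha hb ht₁.le, mul_sqrt_div_eq_sqrt_mul_inv hS hc hd ht₁.le,
    mul_sqrt_div_eq_sqrt_mul_inv (add_pos hR hS) (add_pos ha hc) (add_pos hb hd) ht₁.le]
  have ht : 0 < 1 - t := sub_pos.2 ht₁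
  calc _ ≤ _ := sqrt_mul_add_sqrt_mul_le (by positivity) (by positivity) (by positivity)
        (by positivity)
    _ ≤ _ := sqrt_le_sqrt (mul_le_mul hsum₁ hsum₂ (by positivity) (by positivity))

theorem arcsin_sqrt_eq_integral {q : ℝ} (hq₀ : 0 ≤ q) (hq₁ : q < 1) :
    arcsin √q = ∫ s in (0 : ℝ)..1, √(q / (1 - q * s ^ 2)) := by
  have hpos : ∀ s ∈ Set.uIcc (0 : ℝ) 1, 0 < 1 - q * s ^ 2 := by
    intro s hs
    rw [Set.uIcc_of_le zero_le_one] at hs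
    nlinarith [mul_le_mul_of_nonneg_left (pow_le_one₀ (n := 2) hs.1 hs.2) hq₀]
  have hderiv : ∀ s ∈ Set.uIcc (0 : ℝ) 1,
      HasDerivAt (fun s => arcsin (√q * s)) √(q / (1 - q * s ^ 2)) s := by
    intro s hs
    have hsq : (√q * s) ^ 2 = q * s ^ 2 := by rw [mul_pow, sq_sqrt hq₀]
    have habs : |√q * s| < 1 := by
      rw [← sq_lt_one_iff_abs_lt_one, hsq]; linarith [hpos s hs]
    refine ((hasDerivAt_arcsin (abs_lt.1 habs).1.ne' (abs_lt.1 habs).2.ne).comp s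
      ((hasDerivAt_id s).const_mul √q)).congr_deriv ?_
    rw [hsq, sqrt_div' _ (hpos s hs).le]
    simp [div_eq_mul_inv, mul_comm]
  have hcont : ContinuousOn (fun s : ℝ => √(q / (1 - q * s ^ 2))) (Set.uIcc 0 1) :=
    (continuousOn_const.div (by fun_prop) fun s hs => (hpos s hs).ne').sqrt
  rw [integral_eq_sub_of_hasDerivAt hderiv hcont.intervalIntegrable]
  simp

theorem mul_arcsin_sqrt_eq_integral {R a b : ℝ} (hR : 0 < R) (ha : 0 < a) (hb : 0 < b) :
    R * arcsin √(a * b / ((R + a) * (R + b))) =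
      ∫ s in (0 : ℝ)..1, R * √(a * b / ((R + a) * (R + b) - a * b * s ^ 2)) := by
  have hq : a * b / ((R + a) * (R + b)) < 1 := by
    rw [div_lt_one (by positivity)]; nlinarith [mul_pos hR ha, mul_pos hR hb]
  rw [arcsin_sqrt_eq_integral (by positivity) hq, ← integral_const_mul]
  congr! 3 with s
  field_simp

theorem intervalIntegrable_mul_sqrt_div {R a b : ℝ} (hR : 0 < R) (ha : 0 < a) (hb : 0 < b) :
    IntervalIntegrable (fun s => R * √(a * b / ((R + a) * (R + b) - a * b * s ^ 2)))
      MeasureTheory.volume 0 1 := by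
  refine ContinuousOn.intervalIntegrable
    (continuousOn_const.mul (continuousOn_const.div (by fun_prop) fun s hs => ne_of_gt ?_).sqrt)
  rw [Set.uIcc_of_le zero_le_one] at hs
  nlinarith [mul_pos ha hb, mul_pos hR ha, mul_pos hR hb, pow_le_one₀ (n := 2) hs.1 hs.2]

theorem circle_packing_arcsin_inequality
    (a b c d R S : ℝ) (ha : 0 < a) (hb : 0 < b) (hc : 0 < c) (hd : 0 < d)
    (hR : 0 < R) (hS : 0 < S) :
    R * Real.arcsin (Real.sqrt (a * b / ((R + a) * (R + b)))) +
      S * Real.arcsin (Real.sqrt (c * d / ((S + c) * (S + d)))) ≤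
    (R + S) * Real.arcsin (Real.sqrt ((a + c) * (b + d) /
      ((R + S + a + c) * (R + S + b + d)))) := by
  have hRS := add_pos hR hS
  have hac := add_pos ha hc
  have hbd := add_pos hb hd
  have h₁ := intervalIntegrable_mul_sqrt_div hR ha hb
  have h₂ := intervalIntegrable_mul_sqrt_div hS hc hd
  rw [show R + S + a + c = R + S + (a + c) by ring, show R + S + b + d = R + S + (b + d) by ring,
    mul_arcsin_sqrt_eq_integral hR ha hb, mul_arcsin_sqrt_eq_integral hS hc hd,
    mul_arcsin_sqrt_eq_integral hRS hac hbd, ← integral_add h₁ h₂]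
  refine integral_mono_on_of_le_Ioo zero_le_one (h₁.add h₂)
    (intervalIntegrable_mul_sqrt_div hRS hac hbd) fun s hs => ?_
  exact mul_sqrt_div_superadditive ha hb hc hd hR hS (pow_pos hs.1 2)
    (pow_lt_one₀ hs.1.le hs.2 two_ne_zero)
end

section
/- Let X, Y, Z, U, V, W be positive real numbers such that X, Y, Z are the side lengths of a (nondegenerate) triangle and U, V, W are the side lengths of a (nondegenerate) triangle, i.e. |X−Y| < Z < X+Y and |U−V| < W < U+V. Then X+U, Y+V, Z+W are also the side lengths of a triangle, and if α = arccos((X²+Y²−Z²)/(2XY)) is the angle between the sides of lengths X and Y, β = arccos((U²+V²−W²)/(2UV)) is the angle between the sides of lengths U and V, and γ = arccos(((X+U)²+(Y+V)²−(Z+W)²)/(2(X+U)(Y+V))) is the angle between the sides of lengths X+U and Y+V, then α·(X+Y−Z) + β·(U+V−W) ≤ γ·((X+U)+(Y+V)−(Z+W)). -/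
/-!
Write the sides through tangent lengths, `X = y + z`, `Y = x + z`, `Z = x + y` with `x, y, z > 0`.
Then `X + Y - Z = 2 z` and the angle between `X` and `Y` is `2 arctan (r / z)`, where
`r = √(x y z / (x + y + z))` is the inradius. Tangent lengths of the two triangles add up to those
of the third, so it suffices that `z arctan (r / z)` is superadditive in the tangent lengths.
As a function of `(z, r)` it is the perspective of the concave function `arctan`, hence
superadditive, and it increases with `r`; finally the inradius is itself superadditive, being the geometric mean of the
superadditive functions `(1/x + 1/y + 1/z)⁻¹` and `(x y + y z + z x) / (x + y + z)`.
-/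

open Real Finset

theorem ConcaveOn.mul_map_div_add_mul_map_div_le {s : Set ℝ} {f : ℝ → ℝ} (hf : ConcaveOn ℝ s f)
    {a b u v : ℝ} (ha : 0 < a) (hb : 0 < b) (hu : u / a ∈ s) (hv : v / b ∈ s) :
    a * f (u / a) + b * f (v / b) ≤ (a + b) * f ((u + v) / (a + b)) := by
  have hab : 0 < a + b := add_pos ha hb
  have h := hf.2 hu hv (div_pos ha hab).le (div_pos hb hab).le (by field_simp)
  have hmean : a / (a + b) * (u / a) + b / (a + b) * (v / b) = (u + v) / (a + b) := by
    field_simp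
  simp only [smul_eq_mul, hmean] at h
  calc a * f (u / a) + b * f (v / b)
      = (a + b) * (a / (a + b) * f (u / a) + b / (a + b) * f (v / b)) := by field_simp
    _ ≤ (a + b) * f ((u + v) / (a + b)) := by gcongr

theorem Real.concaveOn_arctan_Ici : ConcaveOn ℝ (Set.Ici 0) arctan := by
  refine AntitoneOn.concaveOn_of_deriv (convex_Ici 0) continuous_arctan.continuousOn
    differentiable_arctan.differentiableOn ?_
  rw [deriv_arctan, interior_Ici]
  intro a ha b _ hab
  have : 0 < a := ha
  dsimp only
  gcongr

theorem Real.arccos_one_sub_sq_div_one_add_sq {t : ℝ} (ht : 0 ≤ t) :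
    arccos ((1 - t ^ 2) / (1 + t ^ 2)) = 2 * arctan t := by
  have hcos : cos (2 * arctan t) = (1 - t ^ 2) / (1 + t ^ 2) := by
    rw [cos_two_mul, cos_sq_arctan]
    field_simp
    ring
  rw [← hcos, arccos_cos]
  · linarith [arctan_nonneg.2 ht]
  · linarith [arctan_lt_pi_div_two t]

theorem add_sq_div_add_le (u v : ℝ) {s t : ℝ} (hs : 0 < s) (ht : 0 < t) :
    (u + v) ^ 2 / (s + t) ≤ u ^ 2 / s + v ^ 2 / t := by
  simpa [Fin.sum_univ_two] using
    sq_sum_div_le_sum_sq_div univ ![u, v] (g := ![s, t]) (by simp [Fin.forall_fin_two, hs, ht])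

theorem Real.sqrt_mul_sqrt_add_sqrt_mul_sqrt_le {a₁ a₂ b₁ b₂ : ℝ} (ha₁ : 0 ≤ a₁) (ha₂ : 0 ≤ a₂)
    (hb₁ : 0 ≤ b₁) (hb₂ : 0 ≤ b₂) :
    √a₁ * √b₁ + √a₂ * √b₂ ≤ √(a₁ + a₂) * √(b₁ + b₂) := by
  simpa [Fin.sum_univ_two] using Real.sum_sqrt_mul_sqrt_le univ (f := ![a₁, a₂]) (g := ![b₁, b₂])
    (by simp [Fin.forall_fin_two, ha₁, ha₂]) (by simp [Fin.forall_fin_two, hb₁, hb₂])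

theorem Finset.sum_sq_div_sum_add_le {ι : Type*} (s : Finset ι) (x y : ι → ℝ)
    (hx : 0 < ∑ i ∈ s, x i) (hy : 0 < ∑ i ∈ s, y i) :
    (∑ i ∈ s, (x i + y i) ^ 2) / ∑ i ∈ s, (x i + y i)
      ≤ (∑ i ∈ s, x i ^ 2) / ∑ i ∈ s, x i + (∑ i ∈ s, y i ^ 2) / ∑ i ∈ s, y i := by
  rw [sum_div, sum_div, sum_div, ← sum_add_distrib, sum_add_distrib (f := x) (g := y)]
  exact sum_le_sum fun i _ ↦ add_sq_div_add_le (x i) (y i) hx hy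

theorem Finset.inv_sum_inv_add_inv_sum_inv_le {ι : Type*} (s : Finset ι) {x y : ι → ℝ}
    (hx : ∀ i ∈ s, 0 < x i) (hy : ∀ i ∈ s, 0 < y i) :
    (∑ i ∈ s, (x i)⁻¹)⁻¹ + (∑ i ∈ s, (y i)⁻¹)⁻¹ ≤ (∑ i ∈ s, (x i + y i)⁻¹)⁻¹ := by
  rcases s.eq_empty_or_nonempty with rfl | hs
  · simp
  set w : ι → ℝ := fun i ↦ (x i + y i)⁻¹
  have hw : 0 < ∑ i ∈ s, w i := sum_pos (fun i hi ↦ inv_pos.2 (add_pos (hx i hi) (hy i hi))) hs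
  -- Titu's lemma with weights `w` against `x⁻¹` and `y⁻¹`; the weights are optimal for `x + y`.
  have hx' := sq_sum_div_le_sum_sq_div s w (g := fun i ↦ (x i)⁻¹) fun i hi ↦ inv_pos.2 (hx i hi)
  have hy' := sq_sum_div_le_sum_sq_div s w (g := fun i ↦ (y i)⁻¹) fun i hi ↦ inv_pos.2 (hy i hi)
  have hsum : ∑ i ∈ s, w i ^ 2 / (x i)⁻¹ + ∑ i ∈ s, w i ^ 2 / (y i)⁻¹ = ∑ i ∈ s, w i := by
    rw [← sum_add_distrib]
    refine sum_congr rfl fun i hi ↦ ?_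
    have := hx i hi; have := hy i hi
    simp only [w]; field_simp
  rw [div_eq_mul_inv] at hx' hy'
  exact ((le_div_iff₀ hw).2 (by nlinarith)).trans_eq (one_div _)

/-- Heron's formula gives the area `√((x + y + z) x y z)` of the triangle with tangent lengths
`x, y, z`, and `r = area / semiperimeter`. -/
noncomputable def inradius (x y z : ℝ) : ℝ := √(x * y * z / (x + y + z))

theorem inradius_nonneg (x y z : ℝ) : 0 ≤ inradius x y z := sqrt_nonneg _

-- The second factor is `(x y + y z + z x) / (x + y + z)`.
theorem inradius_eq_sqrt_mul_sqrt {x y z : ℝ} (hx : 0 < x) (hy : 0 < y) (hz : 0 < z) :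
    inradius x y z =
      √(x⁻¹ + y⁻¹ + z⁻¹)⁻¹ * √((x + y + z - (x ^ 2 + y ^ 2 + z ^ 2) / (x + y + z)) / 2) := by
  rw [inradius, ← sqrt_mul (by positivity)]
  congr 1
  field_simp
  ring

theorem inradius_add_le {x₁ y₁ z₁ x₂ y₂ z₂ : ℝ} (hx₁ : 0 < x₁) (hy₁ : 0 < y₁) (hz₁ : 0 < z₁)
    (hx₂ : 0 < x₂) (hy₂ : 0 < y₂) (hz₂ : 0 < z₂) :
    inradius x₁ y₁ z₁ + inradius x₂ y₂ z₂ ≤ inradius (x₁ + x₂) (y₁ + y₂) (z₁ + z₂) := by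
  have hQ : ∀ {x y z : ℝ}, 0 < x → 0 < y → 0 < z →
      0 ≤ (x + y + z - (x ^ 2 + y ^ 2 + z ^ 2) / (x + y + z)) / 2 := by
    intro x y z hx hy hz
    have : (x ^ 2 + y ^ 2 + z ^ 2) / (x + y + z) ≤ x + y + z :=
      div_le_of_le_mul₀ (by positivity) (by positivity)
        (by nlinarith [mul_pos hx hy, mul_pos hy hz, mul_pos hz hx])
    linarith
  have h₁ : ∀ i, 0 < ![x₁, y₁, z₁] i := by simp [Fin.forall_fin_succ, hx₁, hy₁, hz₁]
  have h₂ : ∀ i, 0 < ![x₂, y₂, z₂] i := by simp [Fin.forall_fin_succ, hx₂, hy₂, hz₂]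
  have hH_add := inv_sum_inv_add_inv_sum_inv_le univ (fun i _ ↦ h₁ i) (fun i _ ↦ h₂ i)
  have hQ_add := sum_sq_div_sum_add_le univ ![x₁, y₁, z₁] ![x₂, y₂, z₂]
    (sum_pos (fun i _ ↦ h₁ i) univ_nonempty) (sum_pos (fun i _ ↦ h₂ i) univ_nonempty)
  simp only [Fin.sum_univ_three, Matrix.cons_val_zero, Matrix.cons_val_one, Matrix.cons_val]
    at hH_add hQ_add
  rw [inradius_eq_sqrt_mul_sqrt hx₁ hy₁ hz₁, inradius_eq_sqrt_mul_sqrt hx₂ hy₂ hz₂,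
    inradius_eq_sqrt_mul_sqrt (by positivity) (by positivity) (by positivity)]
  calc _ ≤ √((x₁⁻¹ + y₁⁻¹ + z₁⁻¹)⁻¹ + (x₂⁻¹ + y₂⁻¹ + z₂⁻¹)⁻¹) *
        √((x₁ + y₁ + z₁ - (x₁ ^ 2 + y₁ ^ 2 + z₁ ^ 2) / (x₁ + y₁ + z₁)) / 2 +
          (x₂ + y₂ + z₂ - (x₂ ^ 2 + y₂ ^ 2 + z₂ ^ 2) / (x₂ + y₂ + z₂)) / 2) :=
        sqrt_mul_sqrt_add_sqrt_mul_sqrt_le (by positivity) (by positivity) (hQ hx₁ hy₁ hz₁)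
          (hQ hx₂ hy₂ hz₂)
    _ ≤ _ := by
        gcongr
        linarith

theorem arccos_lawOfCosines_mul_eq {a b c x y z : ℝ} (hx : 0 < x) (hy : 0 < y) (hz : 0 < z)
    (ha : a = y + z) (hb : b = x + z) (hc : c = x + y) :
    arccos ((a ^ 2 + b ^ 2 - c ^ 2) / (2 * a * b)) * (a + b - c) =
      4 * (z * arctan (inradius x y z / z)) := by
  subst ha hb hc
  have hcos : ((y + z) ^ 2 + (x + z) ^ 2 - (x + y) ^ 2) / (2 * (y + z) * (x + z)) =
      (1 - (inradius x y z / z) ^ 2) / (1 + (inradius x y z / z) ^ 2) := by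
    rw [div_pow, inradius, sq_sqrt (by positivity)]
    field_simp
    ring
  rw [hcos, arccos_one_sub_sq_div_one_add_sq (div_nonneg (inradius_nonneg x y z) hz.le)]
  ring

theorem mul_arctan_inradius_div_add_le {x₁ y₁ z₁ x₂ y₂ z₂ : ℝ}
    (hx₁ : 0 < x₁) (hy₁ : 0 < y₁) (hz₁ : 0 < z₁) (hx₂ : 0 < x₂) (hy₂ : 0 < y₂) (hz₂ : 0 < z₂) :
    z₁ * arctan (inradius x₁ y₁ z₁ / z₁) + z₂ * arctan (inradius x₂ y₂ z₂ / z₂) ≤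
      (z₁ + z₂) * arctan (inradius (x₁ + x₂) (y₁ + y₂) (z₁ + z₂) / (z₁ + z₂)) :=
  calc _ ≤ (z₁ + z₂) * arctan ((inradius x₁ y₁ z₁ + inradius x₂ y₂ z₂) / (z₁ + z₂)) :=
        concaveOn_arctan_Ici.mul_map_div_add_mul_map_div_le hz₁ hz₂
          (div_nonneg (inradius_nonneg _ _ _) hz₁.le) (div_nonneg (inradius_nonneg _ _ _) hz₂.le)
    _ ≤ _ := by
        have := inradius_add_le hx₁ hy₁ hz₁ hx₂ hy₂ hz₂
        gcongr

theorem exists_tangent_lengths {a b c : ℝ} (h₁ : |a - b| < c) (h₂ : c < a + b) :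
    ∃ x y z : ℝ, 0 < x ∧ 0 < y ∧ 0 < z ∧ a = y + z ∧ b = x + z ∧ c = x + y := by
  rw [abs_sub_lt_iff] at h₁
  exact ⟨(b + c - a) / 2, (a + c - b) / 2, (a + b - c) / 2, by linarith, by linarith, by linarith,
    by ring, by ring, by ring⟩

theorem triangle_angle_inequality_general
    (X Y Z U V W : ℝ)
    (h1 : |X - Y| < Z) (h2 : Z < X + Y)
    (h3 : |U - V| < W) (h4 : W < U + V) :
    (|(X + U) - (Y + V)| < Z + W ∧ Z + W < (X + U) + (Y + V)) ∧
    Real.arccos ((X ^ 2 + Y ^ 2 - Z ^ 2) / (2 * X * Y)) * (X + Y - Z) +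
      Real.arccos ((U ^ 2 + V ^ 2 - W ^ 2) / (2 * U * V)) * (U + V - W) ≤
    Real.arccos (((X + U) ^ 2 + (Y + V) ^ 2 - (Z + W) ^ 2) /
      (2 * (X + U) * (Y + V))) * ((X + U) + (Y + V) - (Z + W)) := by
  obtain ⟨x₁, y₁, z₁, hx₁, hy₁, hz₁, hX, hY, hZ⟩ := exists_tangent_lengths h1 h2
  obtain ⟨x₂, y₂, z₂, hx₂, hy₂, hz₂, hU, hV, hW⟩ := exists_tangent_lengths h3 h4
  rw [abs_sub_lt_iff] at h1 h3
  refine ⟨⟨abs_sub_lt_iff.2 ⟨by linarith, by linarith⟩, by linarith⟩, ?_⟩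
  have hα := arccos_lawOfCosines_mul_eq hx₁ hy₁ hz₁ hX hY hZ
  have hβ := arccos_lawOfCosines_mul_eq hx₂ hy₂ hz₂ hU hV hW
  have hγ := arccos_lawOfCosines_mul_eq (add_pos hx₁ hx₂) (add_pos hy₁ hy₂) (add_pos hz₁ hz₂)
    (a := X + U) (b := Y + V) (c := Z + W) (by linarith) (by linarith) (by linarith)
  linarith [mul_arctan_inradius_div_add_le hx₁ hy₁ hz₁ hx₂ hy₂ hz₂]

theorem triangle_angle_inequality
    (X Y Z U V W : ℝ) (hX : 0 < X) (hY : 0 < Y) (hZ : 0 < Z)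
    (hU : 0 < U) (hV : 0 < V) (hW : 0 < W)
    (h1 : |X - Y| < Z) (h2 : Z < X + Y)
    (h3 : |U - V| < W) (h4 : W < U + V) :
    (|(X + U) - (Y + V)| < Z + W ∧ Z + W < (X + U) + (Y + V)) ∧
    Real.arccos ((X ^ 2 + Y ^ 2 - Z ^ 2) / (2 * X * Y)) * (X + Y - Z) +
      Real.arccos ((U ^ 2 + V ^ 2 - W ^ 2) / (2 * U * V)) * (U + V - W) ≤
    Real.arccos (((X + U) ^ 2 + (Y + V) ^ 2 - (Z + W) ^ 2) /
      (2 * (X + U) * (Y + V))) * ((X + U) + (Y + V) - (Z + W)) :=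
  triangle_angle_inequality_general X Y Z U V W h1 h2 h3 h4
end

section
/- Let I ⊆ ℝ be an interval and f : I → [0,1] a twice differentiable, surjective, strictly increasing function such that: (1) f''(x)·(1−f(x)²) + f(x)·(f'(x))² ≤ 0 for all x ∈ I, and (2) for all a,b,c,d,R,S > 0, (R/(R+S))·f⁻¹(√(ab/((R+a)(R+b)))) + (S/(R+S))·f⁻¹(√(cd/((S+c)(S+d)))) ≤ f⁻¹(√((a+c)(b+d)/((R+S+a+c)(R+S+b+d)))). Then for all a,b,c,d,R,S > 0, R·arcsin(√(ab/((R+a)(R+b)))) + S·arcsin(√(cd/((S+c)(S+d)))) ≤ (R+S)·arcsin(√((a+c)(b+d)/((R+S+a+c)(R+S+b+d)))). -/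
/-!
Write `u`, `v`, `w` for the three square roots, all in `(0, 1)`. Condition (1) says
`(1 - f²)^(3/2) · (arcsin ∘ f)'' ≤ 0`, so `arcsin ∘ f` is concave between `g u` and `g v`, where `f`
stays in `(0, 1)` by monotonicity. Jensen's inequality at `g u`, `g v` with weights `R/(R+S)`,
`S/(R+S)`, followed by (2) and the monotonicity of `arcsin ∘ f`, gives the claim.
-/

open Real Set

lemma hasDerivAt_arcsin_comp {f : ℝ → ℝ} {a x : ℝ} (hf : HasDerivAt f a x)
    (hx : f x ∈ Ioo (-1) 1) :
    HasDerivAt (fun y => arcsin (f y)) (a / √(1 - f x ^ 2)) x :=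
  ((hasDerivAt_arcsin hx.1.ne' hx.2.ne).comp x hf).congr_deriv (one_div_mul_eq_div _ _)

lemma hasDerivAt_div_sqrt_one_sub_sq {f f' : ℝ → ℝ} {x f'' : ℝ} (hf : HasDerivAt f (f' x) x)
    (hf' : HasDerivAt f' f'' x) (hx : f x ∈ Ioo (-1) 1) :
    HasDerivAt (fun y => f' y / √(1 - f y ^ 2))
      ((f'' * (1 - f x ^ 2) + f x * f' x ^ 2) / √(1 - f x ^ 2) ^ 3) x := by
  have hpos : 0 < 1 - f x ^ 2 := by nlinarith [hx.1, hx.2]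
  have hs : √(1 - f x ^ 2) ≠ 0 := (sqrt_pos.2 hpos).ne'
  refine (hf'.fun_div (((hf.fun_pow 2).const_sub 1).sqrt hpos.ne') hs).congr_deriv ?_
  field_simp
  rw [sq_sqrt hpos.le]
  push_cast
  ring

theorem concaveOn_arcsin_comp {D : Set ℝ} {f f' f'' : ℝ → ℝ} (hD : Convex ℝ D)
    (hf : ∀ x ∈ D, HasDerivWithinAt f (f' x) D x)
    (hf' : ∀ x ∈ D, HasDerivWithinAt f' (f'' x) D x)
    (hrange : MapsTo f D (Ioo (-1) 1))
    (hf'' : ∀ x ∈ D, f'' x * (1 - f x ^ 2) + f x * f' x ^ 2 ≤ 0) :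
    ConcaveOn ℝ D (fun x => arcsin (f x)) := by
  have hf_at : ∀ x ∈ interior D, HasDerivAt f (f' x) x := fun x hx =>
    (hf x (interior_subset hx)).hasDerivAt (mem_interior_iff_mem_nhds.1 hx)
  have hf'_at : ∀ x ∈ interior D, HasDerivAt f' (f'' x) x := fun x hx =>
    (hf' x (interior_subset hx)).hasDerivAt (mem_interior_iff_mem_nhds.1 hx)
  refine concaveOn_of_hasDerivWithinAt2_nonpos hD
    (continuous_arcsin.comp_continuousOn fun x hx => (hf x hx).continuousWithinAt)
    (fun x hx => (hasDerivAt_arcsin_comp (hf_at x hx)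
      (hrange (interior_subset hx))).hasDerivWithinAt)
    (fun x hx => (hasDerivAt_div_sqrt_one_sub_sq (hf_at x hx) (hf'_at x hx)
      (hrange (interior_subset hx))).hasDerivWithinAt)
    fun x hx => div_nonpos_of_nonpos_of_nonneg (hf'' x (interior_subset hx)) (by positivity)

theorem concaveOn_uIcc_arcsin_comp {I : Set ℝ} {f f' f'' : ℝ → ℝ} (hI : I.OrdConnected)
    (hmono : MonotoneOn f I) (hf : ∀ x ∈ I, HasDerivWithinAt f (f' x) I x)
    (hf' : ∀ x ∈ I, HasDerivWithinAt f' (f'' x) I x)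
    (hf'' : ∀ x ∈ I, f'' x * (1 - f x ^ 2) + f x * f' x ^ 2 ≤ 0) {p q : ℝ} (hp : p ∈ I)
    (hq : q ∈ I) (hfp : f p ∈ Ioo (-1) 1) (hfq : f q ∈ Ioo (-1) 1) :
    ConcaveOn ℝ (uIcc p q) (fun x => arcsin (f x)) := by
  have hpqI : uIcc p q ⊆ I := hI.uIcc_subset hp hq
  have hrange : MapsTo f (uIcc p q) (Ioo (-1) 1) := fun y hy =>
    ordConnected_Ioo.uIcc_subset hfp hfq ((hmono.mono hpqI).mapsTo_uIcc hy)
  exact concaveOn_arcsin_comp (convex_uIcc p q) (fun x hx => (hf x (hpqI hx)).mono hpqI)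
    (fun x hx => (hf' x (hpqI hx)).mono hpqI) hrange fun x hx => hf'' x (hpqI hx)

theorem ConcaveOn.mul_add_mul_le {s : Set ℝ} {φ : ℝ → ℝ} (hφ : ConcaveOn ℝ s φ) {p q R S : ℝ}
    (hp : p ∈ s) (hq : q ∈ s) (hR : 0 ≤ R) (hS : 0 ≤ S) (hRS : 0 < R + S) :
    R * φ p + S * φ q ≤ (R + S) * φ (R / (R + S) * p + S / (R + S) * q) := by
  have hjensen := hφ.2 hp hq (div_nonneg hR hRS.le) (div_nonneg hS hRS.le)
    (by rw [← add_div, div_self hRS.ne'])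
  simp only [smul_eq_mul] at hjensen
  calc R * φ p + S * φ q = (R + S) * (R / (R + S) * φ p + S / (R + S) * φ q) := by field_simp
    _ ≤ _ := mul_le_mul_of_nonneg_left hjensen hRS.le

lemma mul_div_add_mul_add_mem_Ioo {a b R : ℝ} (ha : 0 < a) (hb : 0 < b) (hR : 0 < R) :
    a * b / ((R + a) * (R + b)) ∈ Ioo 0 1 :=
  ⟨by positivity, (div_lt_one (by positivity)).2 (by nlinarith [mul_pos hR hR, mul_pos hR ha])⟩

lemma sqrt_mem_Ioo_zero_one {t : ℝ} (ht : t ∈ Ioo 0 1) : √t ∈ Ioo 0 1 :=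
  ⟨sqrt_pos.2 ht.1, by simpa using sqrt_lt_sqrt ht.1.le ht.2⟩

theorem arcsin_ineq_of_concavity_and_inverse_ineq_general
    (I : Set ℝ) (hI : I.OrdConnected)
    (f f' f'' g : ℝ → ℝ)
    (hmono : StrictMonoOn f I)
    (hg : Set.MapsTo g (Set.Icc 0 1) I)
    (hfg : ∀ y ∈ Set.Icc (0 : ℝ) 1, f (g y) = y)
    (hd1 : ∀ x ∈ I, HasDerivWithinAt f (f' x) I x)
    (hd2 : ∀ x ∈ I, HasDerivWithinAt f' (f'' x) I x)
    (h1 : ∀ x ∈ I, f'' x * (1 - (f x) ^ 2) + f x * (f' x) ^ 2 ≤ 0)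
    (h2 : ∀ a b c d R S : ℝ, 0 < a → 0 < b → 0 < c → 0 < d → 0 < R → 0 < S →
      (R / (R + S)) * g (Real.sqrt (a * b / ((R + a) * (R + b)))) +
        (S / (R + S)) * g (Real.sqrt (c * d / ((S + c) * (S + d)))) ≤
      g (Real.sqrt ((a + c) * (b + d) /
        ((R + S + a + c) * (R + S + b + d))))) :
    ∀ a b c d R S : ℝ, 0 < a → 0 < b → 0 < c → 0 < d → 0 < R → 0 < S →
      R * Real.arcsin (Real.sqrt (a * b / ((R + a) * (R + b)))) +
        S * Real.arcsin (Real.sqrt (c * d / ((S + c) * (S + d)))) ≤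
      (R + S) * Real.arcsin (Real.sqrt ((a + c) * (b + d) /
        ((R + S + a + c) * (R + S + b + d)))) := by
  intro a b c d R S ha hb hc hd hR hS
  have hu := sqrt_mem_Ioo_zero_one (mul_div_add_mul_add_mem_Ioo ha hb hR)
  have hv := sqrt_mem_Ioo_zero_one (mul_div_add_mul_add_mem_Ioo hc hd hS)
  have hw := sqrt_mem_Ioo_zero_one (mul_div_add_mul_add_mem_Ioo (add_pos ha hc) (add_pos hb hd)
    (add_pos hR hS))
  simp only [← add_assoc] at hw
  set u := √(a * b / ((R + a) * (R + b)))
  set v := √(c * d / ((S + c) * (S + d)))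
  set w := √((a + c) * (b + d) / ((R + S + a + c) * (R + S + b + d)))
  have hu₀ := Ioo_subset_Icc_self hu
  have hv₀ := Ioo_subset_Icc_self hv
  have hw₀ := Ioo_subset_Icc_self hw
  have hmean_mem : R / (R + S) * g u + S / (R + S) * g v ∈ I :=
    hI.uIcc_subset (hg hu₀) (hg hv₀) <| (convex_uIcc (g u) (g v) : Convex ℝ _) left_mem_uIcc
      right_mem_uIcc (by positivity) (by positivity) (by rw [← add_div, div_self (by positivity)])
  calc R * arcsin u + S * arcsin v = R * arcsin (f (g u)) + S * arcsin (f (g v)) := by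
        rw [hfg u hu₀, hfg v hv₀]
    _ ≤ (R + S) * arcsin (f (R / (R + S) * g u + S / (R + S) * g v)) := by
        have hIoo : Ioo (0 : ℝ) 1 ⊆ Ioo (-1) 1 := Ioo_subset_Ioo_left (by norm_num)
        refine (concaveOn_uIcc_arcsin_comp hI hmono.monotoneOn hd1 hd2 h1 (hg hu₀) (hg hv₀)
          (by rw [hfg u hu₀]; exact hIoo hu) (by rw [hfg v hv₀]; exact hIoo hv)).mul_add_mul_le
          left_mem_uIcc right_mem_uIcc hR.le hS.le (by positivity)
    _ ≤ (R + S) * arcsin (f (g w)) :=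
        mul_le_mul_of_nonneg_left (monotone_arcsin (hmono.monotoneOn hmean_mem (hg hw₀)
          (h2 a b c d R S ha hb hc hd hR hS))) (by positivity)
    _ = (R + S) * arcsin w := by rw [hfg w hw₀]

theorem arcsin_ineq_of_concavity_and_inverse_ineq
    (I : Set ℝ) (hI : I.OrdConnected)
    (f f' f'' g : ℝ → ℝ)
    (hmaps : Set.MapsTo f I (Set.Icc 0 1))
    (hsurj : Set.SurjOn f I (Set.Icc 0 1))
    (hmono : StrictMonoOn f I)
    (hg : Set.MapsTo g (Set.Icc 0 1) I)
    (hgf : ∀ x ∈ I, g (f x) = x)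
    (hfg : ∀ y ∈ Set.Icc (0 : ℝ) 1, f (g y) = y)
    (hd1 : ∀ x ∈ I, HasDerivWithinAt f (f' x) I x)
    (hd2 : ∀ x ∈ I, HasDerivWithinAt f' (f'' x) I x)
    (h1 : ∀ x ∈ I, f'' x * (1 - (f x) ^ 2) + f x * (f' x) ^ 2 ≤ 0)
    (h2 : ∀ a b c d R S : ℝ, 0 < a → 0 < b → 0 < c → 0 < d → 0 < R → 0 < S →
      (R / (R + S)) * g (Real.sqrt (a * b / ((R + a) * (R + b)))) +
        (S / (R + S)) * g (Real.sqrt (c * d / ((S + c) * (S + d)))) ≤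
      g (Real.sqrt ((a + c) * (b + d) /
        ((R + S + a + c) * (R + S + b + d))))) :
    ∀ a b c d R S : ℝ, 0 < a → 0 < b → 0 < c → 0 < d → 0 < R → 0 < S →
      R * Real.arcsin (Real.sqrt (a * b / ((R + a) * (R + b)))) +
        S * Real.arcsin (Real.sqrt (c * d / ((S + c) * (S + d)))) ≤
      (R + S) * Real.arcsin (Real.sqrt ((a + c) * (b + d) /
        ((R + S + a + c) * (R + S + b + d)))) :=
  arcsin_ineq_of_concavity_and_inverse_ineq_general I hI f f' f'' g hmono hg hfg hd1 hd2 h1 h2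
end

section
/- Suppose that for every a,b,c,d,R,S > 0 the inequality (R/(R+S))·(1/(1−√(ab/((R+a)(R+b))))) + (S/(R+S))·(1/(1−√(cd/((S+c)(S+d))))) ≤ 1/(1−√((a+c)(b+d)/((R+S+a+c)(R+S+b+d)))) holds. Then for every a,b,c,d,R,S > 0, R·arcsin(√(ab/((R+a)(R+b)))) + S·arcsin(√(cd/((S+c)(S+d)))) ≤ (R+S)·arcsin(√((a+c)(b+d)/((R+S+a+c)(R+S+b+d)))). -/
/-!
With `η y = arcsin (1 - y⁻¹)` one has `arcsin s = η (1 - s)⁻¹`. On `[1/2, ∞)` the function `η`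
is nondecreasing and concave, since `η' y = 1 / (y √(2y - 1))` decreases. Hence Jensen's
inequality for the weights `R / (R + S)`, `S / (R + S)`, followed by monotonicity of `η`
applied to the assumed inequality between the points `(1 - s)⁻¹`, gives the claim.
-/

open Real Set

lemma hasDerivAt_arcsin_one_sub_inv {y : ℝ} (hy : 1 / 2 < y) :
    HasDerivAt (fun y => arcsin (1 - y⁻¹)) (1 / (y * √(2 * y - 1))) y := by
  have hy₀ : 0 < y := by linarith
  have hinner : HasDerivAt (fun y : ℝ => 1 - y⁻¹) (y ^ 2)⁻¹ y := by
    simpa using (hasDerivAt_inv hy₀.ne').const_sub 1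
  have hne₁ : 1 - y⁻¹ ≠ -1 := by
    have : y⁻¹ < 2 := by rw [inv_lt_comm₀ hy₀ two_pos]; linarith
    linarith
  have hne₂ : 1 - y⁻¹ ≠ 1 := by simp [hy₀.ne']
  have hroot : √(1 - (1 - y⁻¹) ^ 2) = √(2 * y - 1) / y := by
    have hsq : 1 - (1 - y⁻¹) ^ 2 = (2 * y - 1) / y ^ 2 := by field_simp; ring
    rw [hsq, sqrt_div' _ (sq_nonneg y), sqrt_sq hy₀.le]
  refine ((hasDerivAt_arcsin hne₁ hne₂).comp y hinner).congr_deriv ?_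
  rw [hroot]
  field_simp

lemma concaveOn_arcsin_one_sub_inv : ConcaveOn ℝ (Ici (1 / 2)) (fun y => arcsin (1 - y⁻¹)) := by
  have hpos : ∀ y ∈ Ici (1 / 2 : ℝ), y ≠ 0 := fun y hy => by
    rw [mem_Ici] at hy; positivity
  refine AntitoneOn.concaveOn_of_deriv (convex_Ici _)
    (continuous_arcsin.comp_continuousOn (continuousOn_const.sub (continuousOn_inv₀.mono hpos)))
    ?_ ?_
  · rw [interior_Ici]
    exact fun y hy => (hasDerivAt_arcsin_one_sub_inv hy).differentiableAt.differentiableWithinAt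
  · rw [interior_Ici]
    intro x hx y hy hxy
    rw [(hasDerivAt_arcsin_one_sub_inv hx).deriv, (hasDerivAt_arcsin_one_sub_inv hy).deriv]
    rw [mem_Ioi] at hx
    have hroot : 0 < √(2 * x - 1) := sqrt_pos.2 (by linarith)
    gcongr
    linarith

lemma monotoneOn_arcsin_one_sub_inv : MonotoneOn (fun y => arcsin (1 - y⁻¹)) (Ioi 0) :=
  fun _ hx _ _ hxy => arcsin_le_arcsin (by gcongr)

lemma convex_combination_arcsin_le {w₁ w₂ s t u : ℝ} (hw₁ : 0 ≤ w₁) (hw₂ : 0 ≤ w₂)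
    (hw : w₁ + w₂ = 1) (hs₀ : -1 ≤ s) (hs₁ : s < 1) (ht₀ : -1 ≤ t) (ht₁ : t < 1)
    (h : w₁ * (1 - s)⁻¹ + w₂ * (1 - t)⁻¹ ≤ (1 - u)⁻¹) :
    w₁ * arcsin s + w₂ * arcsin t ≤ arcsin u := by
  set η : ℝ → ℝ := fun y => arcsin (1 - y⁻¹)
  have harcsin (x : ℝ) : arcsin x = η (1 - x)⁻¹ := by simp [η]
  have hmem {x : ℝ} (hx₀ : -1 ≤ x) (hx₁ : x < 1) : (1 - x)⁻¹ ∈ Ici (1 / 2) := by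
    rw [mem_Ici, one_div]
    exact inv_anti₀ (by linarith) (by linarith)
  have hjensen := concaveOn_arcsin_one_sub_inv.2 (hmem hs₀ hs₁) (hmem ht₀ ht₁) hw₁ hw₂ hw
  have havg : (0 : ℝ) < w₁ * (1 - s)⁻¹ + w₂ * (1 - t)⁻¹ :=
    lt_of_lt_of_le (by norm_num) (convex_Ici _ (hmem hs₀ hs₁) (hmem ht₀ ht₁) hw₁ hw₂ hw)
  calc w₁ * arcsin s + w₂ * arcsin t
      = w₁ • η (1 - s)⁻¹ + w₂ • η (1 - t)⁻¹ := by simp only [harcsin, smul_eq_mul]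
    _ ≤ η (w₁ • (1 - s)⁻¹ + w₂ • (1 - t)⁻¹) := hjensen
    _ ≤ η (1 - u)⁻¹ := monotoneOn_arcsin_one_sub_inv havg (havg.trans_le h) h
    _ = arcsin u := (harcsin u).symm

lemma sqrt_mul_div_add_mul_add_lt_one {a b R : ℝ} (ha : 0 ≤ a) (hb : 0 ≤ b) (hR : 0 < R) :
    √(a * b / ((R + a) * (R + b))) < 1 := by
  rw [sqrt_lt' one_pos, one_pow, div_lt_one (by positivity)]
  nlinarith [mul_pos hR hR]

theorem arcsin_ineq_of_reciprocal_ineq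
    (h : ∀ a b c d R S : ℝ, 0 < a → 0 < b → 0 < c → 0 < d → 0 < R → 0 < S →
      (R / (R + S)) * (1 / (1 - Real.sqrt (a * b / ((R + a) * (R + b))))) +
        (S / (R + S)) * (1 / (1 - Real.sqrt (c * d / ((S + c) * (S + d))))) ≤
      1 / (1 - Real.sqrt ((a + c) * (b + d) /
        ((R + S + a + c) * (R + S + b + d))))) :
    ∀ a b c d R S : ℝ, 0 < a → 0 < b → 0 < c → 0 < d → 0 < R → 0 < S →
      R * Real.arcsin (Real.sqrt (a * b / ((R + a) * (R + b)))) +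
        S * Real.arcsin (Real.sqrt (c * d / ((S + c) * (S + d)))) ≤
      (R + S) * Real.arcsin (Real.sqrt ((a + c) * (b + d) /
        ((R + S + a + c) * (R + S + b + d)))) := by
  intro a b c d R S ha hb hc hd hR hS
  have hRS : 0 < R + S := by positivity
  have key := convex_combination_arcsin_le (div_nonneg hR.le hRS.le) (div_nonneg hS.le hRS.le)
    (by field_simp) (by linarith [sqrt_nonneg (a * b / ((R + a) * (R + b)))])
    (sqrt_mul_div_add_mul_add_lt_one ha.le hb.le hR)
    (by linarith [sqrt_nonneg (c * d / ((S + c) * (S + d)))])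
    (sqrt_mul_div_add_mul_add_lt_one hc.le hd.le hS)
    (by simpa only [one_div] using h a b c d R S ha hb hc hd hR hS)
  calc R * arcsin √(a * b / ((R + a) * (R + b))) + S * arcsin √(c * d / ((S + c) * (S + d)))
      = (R + S) * (R / (R + S) * arcsin √(a * b / ((R + a) * (R + b))) +
          S / (R + S) * arcsin √(c * d / ((S + c) * (S + d)))) := by field_simp
    _ ≤ _ := mul_le_mul_of_nonneg_left key hRS.le
end

section
/- For all real x, y, z, w, P(x,y,z,w) ≥ 0. -/
noncomputable def L (α β γ δ : ℝ) : ℝ :=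
  α ^ 2 * β ^ 2 * (α - β) ^ 2 +
  β ^ 2 * (1 - α * β) * (1 + α * β - 2 * α ^ 2) * γ ^ 2 +
  α ^ 2 * (1 - α * β) * (1 + α * β - 2 * β ^ 2) * δ ^ 2 -
  α * β * (2 + α * β ^ 3 - 4 * α * β + α ^ 3 * β) * γ * δ +
  β * (1 - α * β) * (2 * α - β - α * β ^ 2) * γ ^ 3 * δ -
  (α ^ 2 + β ^ 2 + 2 * α ^ 3 * β ^ 3 - 4 * α ^ 2 * β ^ 2) * γ ^ 2 * δ ^ 2 +
  α * (1 - α * β) * (2 * β - α - α ^ 2 * β) * γ * δ ^ 3 +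
  (α - β) ^ 2 * γ ^ 3 * δ ^ 3

noncomputable def P (x y z w : ℝ) : ℝ :=
  L (x ^ 2 / (1 + x ^ 2)) (y ^ 2 / (1 + y ^ 2)) (z ^ 2 / (1 + z ^ 2))
      (w ^ 2 / (1 + w ^ 2)) *
    ((1 + x ^ 2) ^ 4 * (1 + y ^ 2) ^ 4 * (1 + z ^ 2) ^ 3 * (1 + w ^ 2) ^ 3)

-- Key inequality: with `p = αβ`, `q = γδ`, `s = (α-β)²`, `t = (γ-δ)²`,
-- the product `L α β γ δ * L β α γ δ` equals this expression, which is nonnegative.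
set_option maxHeartbeats 8000000 in
theorem v1_nonneg (p q s t : ℝ) (hp0 : 0 ≤ p) (hp1 : p ≤ 1) (hq0 : 0 ≤ q) (hq1 : q ≤ 1)
    (hs0 : 0 ≤ s) (hs1 : s ≤ (1 - p) ^ 2) (ht0 : 0 ≤ t) (ht1 : t ≤ (1 - q) ^ 2) :
    0 ≤ ((1 - p ^ 2) * (1 - q)) ^ 2 * (p * t - q * s) ^ 2
      + ((1 - p ^ 2) * (1 - q)) * ((p - q) * ((1 - q) * (p + q) * s - 2 * p * (1 - p) * t))
          * (s * t + 2 * p * t + 2 * q * s)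
      + ((p - q) * ((1 - q) * (p + q) * s - 2 * p * (1 - p) * t)) ^ 2 := by
  rcases eq_or_lt_of_le hp1 with hp | hp
  · -- p = 1 forces s = 0 and the expression vanishes
    have hs : s = 0 := le_antisymm (by nlinarith) hs0
    subst hs
    subst hp
    nlinarith [sq_nonneg t]
  · have h1p : (0:ℝ) < 1 - p := by linarith
    have hW1 : 0 ≤ (1 - p) ^ 2 - s := by linarith
    have hW2 : 0 ≤ (1 - q) ^ 2 - t := by linarith
    have key : (1 + p) ^ 2 * (1 - p) ^ 4 *
        (((1 - p ^ 2) * (1 - q)) ^ 2 * (p * t - q * s) ^ 2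
          + ((1 - p ^ 2) * (1 - q)) * ((p - q) * ((1 - q) * (p + q) * s - 2 * p * (1 - p) * t))
              * (s * t + 2 * p * t + 2 * q * s)
          + ((p - q) * ((1 - q) * (p + q) * s - 2 * p * (1 - p) * t)) ^ 2)
        = (p * (1 + p) ^ 2 * (((1 - p) ^ 2 - s) * (1 - p) ^ 2 * (1 - q) ^ 2
              - ((1 - q) ^ 2 - t) * (1 - p) ^ 4)
            + (p - q) * (1 - p ^ 2) * (1 - q) ^ 2 * ((1 - p) ^ 2 - s) * s
            - (p - q) * (s + p * (1 - p) ^ 2 + p ^ 2 * ((1 - p) ^ 2 - s))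
                * (((1 - p) ^ 2 - s) * (1 - q) ^ 2 - ((1 - q) ^ 2 - t) * (1 - p) ^ 2)) ^ 2
          + (p - q) ^ 2 * s * t * ((1 - q) ^ 2 - t)
              * ((1 + p ^ 4) * s + 4 * p * (1 + p ^ 2) * (1 - p) ^ 2
                + 2 * p ^ 2 * (3 * (1 - p) ^ 2 + ((1 - p) ^ 2 - s)))
              * (1 - p) ^ 4 := by
      ring
    have hZ : 0 ≤ (1 + p ^ 4) * s + 4 * p * (1 + p ^ 2) * (1 - p) ^ 2
        + 2 * p ^ 2 * (3 * (1 - p) ^ 2 + ((1 - p) ^ 2 - s)) := by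
      have h1 : 0 ≤ (1 + p ^ 4) * s := mul_nonneg (by positivity) hs0
      have h2 : 0 ≤ 4 * p * (1 + p ^ 2) * (1 - p) ^ 2 := by positivity
      have h3 : 0 ≤ 2 * p ^ 2 * (3 * (1 - p) ^ 2 + ((1 - p) ^ 2 - s)) := by
        apply mul_nonneg (by positivity)
        nlinarith [sq_nonneg (1 - p)]
      linarith
    have hRHS : 0 ≤ (p - q) ^ 2 * s * t * ((1 - q) ^ 2 - t)
        * ((1 + p ^ 4) * s + 4 * p * (1 + p ^ 2) * (1 - p) ^ 2
          + 2 * p ^ 2 * (3 * (1 - p) ^ 2 + ((1 - p) ^ 2 - s)))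
        * (1 - p) ^ 4 := by
      apply mul_nonneg (mul_nonneg (mul_nonneg (mul_nonneg (mul_nonneg (sq_nonneg _) hs0) ht0) hW2) hZ)
      positivity
    have hpos : (0:ℝ) < (1 + p) ^ 2 * (1 - p) ^ 4 :=
      mul_pos (pow_pos (by linarith) 2) (pow_pos h1p 4)
    have h2 : 0 ≤ (1 + p) ^ 2 * (1 - p) ^ 4 *
        (((1 - p ^ 2) * (1 - q)) ^ 2 * (p * t - q * s) ^ 2
          + ((1 - p ^ 2) * (1 - q)) * ((p - q) * ((1 - q) * (p + q) * s - 2 * p * (1 - p) * t))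
              * (s * t + 2 * p * t + 2 * q * s)
          + ((p - q) * ((1 - q) * (p + q) * s - 2 * p * (1 - p) * t)) ^ 2) := by
      rw [key]; exact add_nonneg (sq_nonneg _) hRHS
    exact le_of_not_gt fun hneg => absurd h2 (not_le.mpr (mul_neg_of_pos_of_neg hpos hneg))

set_option maxHeartbeats 8000000 in
theorem L_box (a b g d : ℝ) (ha0 : 0 ≤ a) (ha1 : a ≤ 1) (hb0 : 0 ≤ b) (hb1 : b ≤ 1)
    (hg0 : 0 ≤ g) (hg1 : g ≤ 1) (hd0 : 0 ≤ d) (hd1 : d ≤ 1) : 0 ≤ L a b g d := by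
  have hab0 : 0 ≤ a * b := mul_nonneg ha0 hb0
  have hgd0 : 0 ≤ g * d := mul_nonneg hg0 hd0
  have hab1 : a * b ≤ 1 := by nlinarith [mul_nonneg ha0 (sub_nonneg.mpr hb1)]
  have hgd1 : g * d ≤ 1 := by nlinarith [mul_nonneg hg0 (sub_nonneg.mpr hd1)]
  have hs1 : (a - b) ^ 2 ≤ (1 - a * b) ^ 2 := by
    nlinarith [mul_nonneg (mul_nonneg (mul_nonneg (sub_nonneg.mpr ha1) (sub_nonneg.mpr hb1))
      (by linarith : (0:ℝ) ≤ 1 + a)) (by linarith : (0:ℝ) ≤ 1 + b)]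
  have ht1 : (g - d) ^ 2 ≤ (1 - g * d) ^ 2 := by
    nlinarith [mul_nonneg (mul_nonneg (mul_nonneg (sub_nonneg.mpr hg1) (sub_nonneg.mpr hd1))
      (by linarith : (0:ℝ) ≤ 1 + g)) (by linarith : (0:ℝ) ≤ 1 + d)]
  -- sum of L and its (a,b)-swap is manifestly nonnegative
  have hsum : 0 ≤ L a b g d + L b a g d := by
    have hid : L a b g d + L b a g d =
        2 * (a - b) ^ 2 * (1 - g * d) ^ 2 * (g * d + (a * b) ^ 2)
        + (g - d) ^ 2 * (1 - a * b) * (2 * (a * b) * (1 - a * b) * (1 + g * d)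
            + (1 + a * b) * (1 - g * d) * (a - b) ^ 2) := by
      unfold L; ring
    rw [hid]
    have hA : 0 ≤ 2 * (a - b) ^ 2 * (1 - g * d) ^ 2 * (g * d + (a * b) ^ 2) := by
      apply mul_nonneg (by positivity)
      exact add_nonneg hgd0 (sq_nonneg _)
    have hB : 0 ≤ (g - d) ^ 2 * (1 - a * b) * (2 * (a * b) * (1 - a * b) * (1 + g * d)
        + (1 + a * b) * (1 - g * d) * (a - b) ^ 2) := by
      apply mul_nonneg (mul_nonneg (sq_nonneg _) (by linarith))
      apply add_nonneg
      · apply mul_nonneg (mul_nonneg (by linarith) (by linarith)) (by linarith)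
      · apply mul_nonneg (mul_nonneg (by linarith) (by linarith)) (sq_nonneg _)
    linarith
  -- product of L and its (a,b)-swap is nonnegative by the v1 inequality
  have hprod : 0 ≤ L a b g d * L b a g d := by
    have hid : L a b g d * L b a g d =
        ((1 - (a * b) ^ 2) * (1 - g * d)) ^ 2
            * ((a * b) * (g - d) ^ 2 - (g * d) * (a - b) ^ 2) ^ 2
          + ((1 - (a * b) ^ 2) * (1 - g * d)) * ((a * b - g * d)
              * ((1 - g * d) * (a * b + g * d) * (a - b) ^ 2
                - 2 * (a * b) * (1 - a * b) * (g - d) ^ 2))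
              * ((a - b) ^ 2 * (g - d) ^ 2 + 2 * (a * b) * (g - d) ^ 2
                + 2 * (g * d) * (a - b) ^ 2)
          + ((a * b - g * d) * ((1 - g * d) * (a * b + g * d) * (a - b) ^ 2
              - 2 * (a * b) * (1 - a * b) * (g - d) ^ 2)) ^ 2 := by
      unfold L; ring
    rw [hid]
    exact v1_nonneg (a * b) (g * d) ((a - b) ^ 2) ((g - d) ^ 2) hab0 hab1 hgd0 hgd1
      (sq_nonneg _) hs1 (sq_nonneg _) ht1
  nlinarith [hsum, hprod]

theorem P_nonneg (x y z w : ℝ) : 0 ≤ P x y z w := by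
  unfold P
  have key : ∀ u : ℝ, 0 ≤ u ^ 2 / (1 + u ^ 2) ∧ u ^ 2 / (1 + u ^ 2) ≤ 1 := by
    intro u
    constructor
    · positivity
    · rw [div_le_one (by positivity)]
      nlinarith [sq_nonneg u]
  apply mul_nonneg
  · exact L_box _ _ _ _ (key x).1 (key x).2 (key y).1 (key y).2 (key z).1 (key z).2
      (key w).1 (key w).2
  · positivity
end

section
/- For all real α, β, γ, δ, the identity L(α,β,γ,δ) = L₁ + L₂ + L₃ holds, where L₁ = (γ+δ)·(−α²β + αβ² − αδ + βγ − βγδ + αγδ − αβ²γ + α²βδ)², L₂ = (1−γ)(1−δ)·(αβ−1)²·(αδ−βγ)², and L₃ = (1−γ)(1−δ)·(α−β)²·(αβ−γδ)². -/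
theorem L_sos_decomposition (α β γ δ : ℝ) :
    L α β γ δ =
      (γ + δ) *
          (-(α ^ 2 * β) + α * β ^ 2 - α * δ + β * γ - β * γ * δ +
            α * γ * δ - α * β ^ 2 * γ + α ^ 2 * β * δ) ^ 2 +
        (1 - γ) * (1 - δ) * (α * β - 1) ^ 2 * (α * δ - β * γ) ^ 2 +
        (1 - γ) * (1 - δ) * (α - β) ^ 2 * (α * β - γ * δ) ^ 2 := by
  unfold L; ring
end

section
/- For all real α, β and all real γ, δ satisfying γ + δ ≥ 0 and (1−γ)(1−δ) ≥ 0, one has L(α,β,γ,δ) ≥ 0. -/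
/-- Key quadratic-form lemma: a diagonal quadratic form minus a rank-one term,
with the Schur-complement condition holding with equality. -/
lemma quad_key (d1 d2 d3 e x y z : ℝ) (h1 : 0 ≤ d1) (h2 : 0 ≤ d2) (h3 : 0 ≤ d3)
    (he : 0 ≤ e) (hc : e * (d1 * d2 + d1 * d3 + d2 * d3) = d1 * d2 * d3)
    (hdeg : e = 0 ∨ (0 < d1 ∧ 0 < d2 ∧ 0 < d3)) :
    0 ≤ d1 * x ^ 2 + d2 * y ^ 2 + d3 * z ^ 2 - e * (x + y + z) ^ 2 := by
  rcases hdeg with h0 | ⟨hp1, hp2, hp3⟩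
  · subst h0
    have := mul_nonneg h1 (sq_nonneg x)
    have := mul_nonneg h2 (sq_nonneg y)
    have := mul_nonneg h3 (sq_nonneg z)
    nlinarith
  · have key : d1 * d2 * d3 * (d1 * x ^ 2 + d2 * y ^ 2 + d3 * z ^ 2 - e * (x + y + z) ^ 2)
        = e * (d3 * (d1 * x - d2 * y) ^ 2 + d2 * (d1 * x - d3 * z) ^ 2
            + d1 * (d2 * y - d3 * z) ^ 2) := by
      linear_combination (-(d1 * x ^ 2 + d2 * y ^ 2 + d3 * z ^ 2)) * hc
    have hpos : 0 < d1 * d2 * d3 := mul_pos (mul_pos hp1 hp2) hp3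
    have hrhs : 0 ≤ e * (d3 * (d1 * x - d2 * y) ^ 2 + d2 * (d1 * x - d3 * z) ^ 2
        + d1 * (d2 * y - d3 * z) ^ 2) := by positivity
    nlinarith [key, hpos, hrhs]

lemma L_nonneg_aux (α β γ δ : ℝ)
    (h1 : 0 ≤ γ + δ) (h2 : 0 ≤ (1 - γ) * (1 - δ)) (hgd : δ ≤ γ) :
    0 ≤ L α β γ δ := by
  rcases mul_nonneg_iff.mp h2 with ⟨hg, hd⟩ | ⟨hg, hd⟩
  · -- γ ≤ 1, δ ≤ 1; with γ + δ ≥ 0 and δ ≤ γ we get 0 ≤ γ ≤ 1, -1 ≤ δ ≤ 1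
    have hγ1 : γ ≤ 1 := by linarith
    have hδ1 : δ ≤ 1 := by linarith
    have hγ0 : 0 ≤ γ := by linarith
    have hδm1 : -1 ≤ δ := by linarith
    rcases le_total 0 δ with hδ0 | hδ0
    · -- Case C1a : 0 ≤ δ ≤ γ ≤ 1
      have hb1 : 0 ≤ 1 - δ ^ 2 := by nlinarith
      have ha1 : 0 ≤ 1 - γ ^ 2 := by nlinarith
      have hd1 : 0 ≤ (γ - δ) * γ * (1 - δ ^ 2) := mul_nonneg (mul_nonneg (by linarith) hγ0) hb1
      have hd2 : 0 ≤ (1 - γ ^ 2) * (1 - δ ^ 2) := mul_nonneg ha1 hb1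
      have hd3 : 0 ≤ γ * δ * (1 - γ ^ 2) * (1 - δ ^ 2) := by
        apply mul_nonneg (mul_nonneg (mul_nonneg hγ0 hδ0) ha1) hb1
      have hee : 0 ≤ (γ - δ) * δ * (1 - γ ^ 2) := by
        apply mul_nonneg (mul_nonneg (by linarith) hδ0) ha1
      have hdeg : (γ - δ) * δ * (1 - γ ^ 2) = 0 ∨
          (0 < (γ - δ) * γ * (1 - δ ^ 2) ∧ 0 < (1 - γ ^ 2) * (1 - δ ^ 2) ∧
           0 < γ * δ * (1 - γ ^ 2) * (1 - δ ^ 2)) := by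
        rcases eq_or_lt_of_le (by linarith : (0:ℝ) ≤ γ - δ) with h | ht
        · left; rw [← h]; ring
        rcases eq_or_lt_of_le hδ0 with h | hδp
        · left; rw [← h]; ring
        rcases eq_or_lt_of_le hγ1 with h | hγlt
        · left; rw [h]; ring
        right
        have hγp : 0 < γ := lt_of_lt_of_le hδp hgd
        have hb1p : 0 < 1 - δ ^ 2 := by nlinarith
        have ha1p : 0 < 1 - γ ^ 2 := by nlinarith
        exact ⟨mul_pos (mul_pos ht hγp) hb1p, mul_pos ha1p hb1p,
          mul_pos (mul_pos (mul_pos hγp hδp) ha1p) hb1p⟩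
      have key := quad_key ((γ - δ) * γ * (1 - δ ^ 2)) ((1 - γ ^ 2) * (1 - δ ^ 2))
        (γ * δ * (1 - γ ^ 2) * (1 - δ ^ 2)) ((γ - δ) * δ * (1 - γ ^ 2))
        (β * (1 - α ^ 2)) (α * β * (α - β)) (α - β)
        hd1 hd2 hd3 hee (by ring) hdeg
      have hL : L α β γ δ =
          (γ - δ) * γ * (1 - δ ^ 2) * (β * (1 - α ^ 2)) ^ 2 +
          (1 - γ ^ 2) * (1 - δ ^ 2) * (α * β * (α - β)) ^ 2 +
          γ * δ * (1 - γ ^ 2) * (1 - δ ^ 2) * (α - β) ^ 2 -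
          (γ - δ) * δ * (1 - γ ^ 2) *
            (β * (1 - α ^ 2) + α * β * (α - β) + (α - β)) ^ 2 := by
        unfold L; ring
      rw [hL]; exact key
    · -- Case C1b : -1 ≤ δ ≤ 0 ≤ γ ≤ 1
      have hb1 : 0 ≤ 1 - δ ^ 2 := by nlinarith
      have ha1 : 0 ≤ 1 - γ ^ 2 := by nlinarith
      have hd1 : 0 ≤ (γ - δ) * (-δ) * (1 - γ ^ 2) := by
        apply mul_nonneg (mul_nonneg (by linarith) (by linarith)) ha1
      have hd2 : 0 ≤ (1 - γ ^ 2) * (1 - δ ^ 2) := mul_nonneg ha1 hb1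
      have hd3 : 0 ≤ (γ - δ) * γ * (1 - δ ^ 2) := by
        apply mul_nonneg (mul_nonneg (by linarith) hγ0) hb1
      have hee : 0 ≤ γ * (-δ) * ((1 - γ ^ 2) * (1 - δ ^ 2)) := by
        apply mul_nonneg (mul_nonneg hγ0 (by linarith)) hd2
      have hdeg : γ * (-δ) * ((1 - γ ^ 2) * (1 - δ ^ 2)) = 0 ∨
          (0 < (γ - δ) * (-δ) * (1 - γ ^ 2) ∧ 0 < (1 - γ ^ 2) * (1 - δ ^ 2) ∧
           0 < (γ - δ) * γ * (1 - δ ^ 2)) := by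
        rcases eq_or_lt_of_le hγ0 with h | hγp
        · left; rw [← h]; ring
        rcases eq_or_lt_of_le hδ0 with h | hδn
        · left; rw [h]; ring
        rcases eq_or_lt_of_le hγ1 with h | hγlt
        · left; rw [h]; ring
        rcases eq_or_lt_of_le hδm1 with h | hδgt
        · -- δ = -1 forces γ ≥ 1, contradiction with γ < 1 and γ + δ ≥ 0
          exfalso; rw [← h] at h1; linarith
        right
        have ht : 0 < γ - δ := by linarith
        have ha1p : 0 < 1 - γ ^ 2 := by nlinarith
        have hb1p : 0 < 1 - δ ^ 2 := by nlinarith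
        have hmδ : 0 < -δ := by linarith
        exact ⟨mul_pos (mul_pos ht hmδ) ha1p, mul_pos ha1p hb1p,
          mul_pos (mul_pos ht hγp) hb1p⟩
      have key := quad_key ((γ - δ) * (-δ) * (1 - γ ^ 2)) ((1 - γ ^ 2) * (1 - δ ^ 2))
        ((γ - δ) * γ * (1 - δ ^ 2)) (γ * (-δ) * ((1 - γ ^ 2) * (1 - δ ^ 2)))
        (α * (1 - β ^ 2)) (-(α * β * (α - β))) (-(β * (1 - α ^ 2)))
        hd1 hd2 hd3 hee (by ring) hdeg
      have hL : L α β γ δ =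
          (γ - δ) * (-δ) * (1 - γ ^ 2) * (α * (1 - β ^ 2)) ^ 2 +
          (1 - γ ^ 2) * (1 - δ ^ 2) * (-(α * β * (α - β))) ^ 2 +
          (γ - δ) * γ * (1 - δ ^ 2) * (-(β * (1 - α ^ 2))) ^ 2 -
          γ * (-δ) * ((1 - γ ^ 2) * (1 - δ ^ 2)) *
            (α * (1 - β ^ 2) + -(α * β * (α - β)) + -(β * (1 - α ^ 2))) ^ 2 := by
        unfold L; ring
      rw [hL]; exact key
  · -- Case C2 : 1 ≤ δ ≤ γ
    have hδ1 : 1 ≤ δ := by linarith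
    have hγ1 : 1 ≤ γ := by linarith
    have hA : 0 ≤ γ ^ 2 - 1 := by nlinarith
    have hB : 0 ≤ δ ^ 2 - 1 := by nlinarith
    have hd1 : 0 ≤ (γ - δ) * δ * (γ ^ 2 - 1) := by
      apply mul_nonneg (mul_nonneg (by linarith) (by linarith)) hA
    have hd2 : 0 ≤ (γ ^ 2 - 1) * (δ ^ 2 - 1) := mul_nonneg hA hB
    have hd3 : 0 ≤ γ * δ * ((γ ^ 2 - 1) * (δ ^ 2 - 1)) := by
      apply mul_nonneg (mul_nonneg (by linarith) (by linarith)) hd2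
    have hee : 0 ≤ (γ - δ) * γ * (δ ^ 2 - 1) := by
      apply mul_nonneg (mul_nonneg (by linarith) (by linarith)) hB
    have hdeg : (γ - δ) * γ * (δ ^ 2 - 1) = 0 ∨
        (0 < (γ - δ) * δ * (γ ^ 2 - 1) ∧ 0 < (γ ^ 2 - 1) * (δ ^ 2 - 1) ∧
         0 < γ * δ * ((γ ^ 2 - 1) * (δ ^ 2 - 1))) := by
      rcases eq_or_lt_of_le (by linarith : (0:ℝ) ≤ γ - δ) with h | ht
      · left; rw [← h]; ring
      rcases eq_or_lt_of_le hδ1 with h | hδs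
      · left; rw [← h]; ring
      right
      have hγs : 1 < γ := lt_of_lt_of_le hδs hgd
      have hAp : 0 < γ ^ 2 - 1 := by nlinarith
      have hBp : 0 < δ ^ 2 - 1 := by nlinarith
      have hγp : (0:ℝ) < γ := by linarith
      have hδp : (0:ℝ) < δ := by linarith
      have ht2 : 0 < γ - δ := ht
      exact ⟨mul_pos (mul_pos ht2 hδp) hAp, mul_pos hAp hBp,
        mul_pos (mul_pos hγp hδp) (mul_pos hAp hBp)⟩
    have key := quad_key ((γ - δ) * δ * (γ ^ 2 - 1)) ((γ ^ 2 - 1) * (δ ^ 2 - 1))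
      (γ * δ * ((γ ^ 2 - 1) * (δ ^ 2 - 1))) ((γ - δ) * γ * (δ ^ 2 - 1))
      (α * (1 - β ^ 2)) (-(α * β * (α - β))) (-(α - β))
      hd1 hd2 hd3 hee (by ring) hdeg
    have hL : L α β γ δ =
        (γ - δ) * δ * (γ ^ 2 - 1) * (α * (1 - β ^ 2)) ^ 2 +
        (γ ^ 2 - 1) * (δ ^ 2 - 1) * (-(α * β * (α - β))) ^ 2 +
        γ * δ * ((γ ^ 2 - 1) * (δ ^ 2 - 1)) * (-(α - β)) ^ 2 -
        (γ - δ) * γ * (δ ^ 2 - 1) *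
          (α * (1 - β ^ 2) + -(α * β * (α - β)) + -(α - β)) ^ 2 := by
      unfold L; ring
    rw [hL]; exact key

theorem L_nonneg_on_region (α β γ δ : ℝ)
    (h1 : 0 ≤ γ + δ) (h2 : 0 ≤ (1 - γ) * (1 - δ)) :
    0 ≤ L α β γ δ := by
  rcases le_total δ γ with h | h
  · exact L_nonneg_aux α β γ δ h1 h2 h
  · have hsymm : L α β γ δ = L β α δ γ := by unfold L; ring
    rw [hsymm]
    exact L_nonneg_aux β α δ γ (by linarith) (by rw [mul_comm]; exact h2) h
end
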